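/- If G is a Δ-regular multigraph and ω(G) ≤ Δ, then τ(G) = Δ. -/

import Mathlib

open Finset

/-- A multigraph: a finite vertex type, a finite edge type, an endpoints map
into unordered pairs of vertices, and no loops. -/
structure Multigraph where
  V : Type
  E : Type
  fintypeV : Fintype V
  decEqV : DecidableEq V
  fintypeE : Fintype E
  decEqE : DecidableEq E
  ends : E → Sym2 V
  noLoops : ∀ e, ¬ (ends e).IsDiag

attribute [instance] Multigraph.fintypeV Multigraph.decEqV Multigraph.fintypeE Multigraph.decEqE

namespace Multigraph

open scoped Classical

variable (G : Multigraph)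

/-- The degree of a vertex: the number of edges incident to it. -/
noncomputable def degree (x : G.V) : ℕ :=
  (Finset.univ.filter fun e => x ∈ G.ends e).card

/-- The maximum vertex degree Δ(G). -/
noncomputable def maxDegree : ℕ :=
  Finset.univ.sup fun x : G.V => G.degree x

/-- E(S): the edges with both endpoints in S. -/
noncomputable def edgesIn (S : Finset G.V) : Finset G.E :=
  Finset.univ.filter fun e => ∀ x ∈ G.ends e, x ∈ S

/-- Ceiling division of natural numbers: ⌈a / b⌉. -/
def ceilDiv (a b : ℕ) : ℕ := (a + b - 1) / b

/-- The density ω(G) = max over vertex subsets S with |S| ≥ 2 of ⌈|E(S)| / ⌊|S|/2⌋⌉. -/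
noncomputable def density : ℕ :=
  (Finset.univ.powerset.filter fun S : Finset G.V => 2 ≤ S.card).sup
    fun S => ceilDiv (G.edgesIn S).card (S.card / 2)

/-- A proper edge-coloring with colors `Fin c`: adjacent (distinct, sharing an endpoint)
edges receive distinct colors. -/
def IsProperEdgeColoring (c : ℕ) (col : G.E → Fin c) : Prop :=
  ∀ e f : G.E, e ≠ f → (∃ x : G.V, x ∈ G.ends e ∧ x ∈ G.ends f) → col e ≠ col f

/-- The chromatic index χ'(G): the least number of colors in a proper edge-coloring. -/
noncomputable def chromaticIndex : ℕ :=
  sInf {c : ℕ | ∃ col : G.E → Fin c, G.IsProperEdgeColoring c col}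

/-- μ(x): the set of colors used on the edges incident to x. -/
noncomputable def mu {c : ℕ} (col : G.E → Fin c) (x : G.V) : Finset (Fin c) :=
  (Finset.univ.filter fun e => x ∈ G.ends e).image col

/-- A degree-coloring with c colors: the degree condition and the cover condition. -/
def IsDegreeColoring (c : ℕ) (μ : G.V → Finset (Fin c)) : Prop :=
  (∀ x : G.V, (μ x).card = G.degree x) ∧
  ∀ S : Finset G.V,
    (G.edgesIn S).card ≤ ∑ i : Fin c, (S.filter fun x => i ∈ μ x).card / 2

/-- The degree-coloring index τ(G): the least c admitting a degree-coloring. -/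
noncomputable def tau : ℕ :=
  sInf {c : ℕ | ∃ μ : G.V → Finset (Fin c), G.IsDegreeColoring c μ}

/-- A matching: a set of pairwise non-adjacent edges. -/
def IsMatching (M : Finset G.E) : Prop :=
  ∀ e ∈ M, ∀ f ∈ M, e ≠ f → ∀ x : G.V, ¬ (x ∈ G.ends e ∧ x ∈ G.ends f)

/-- π(F): the maximum size of a matching consisting of edges from F. -/
noncomputable def matchingNumber (F : Finset G.E) : ℕ :=
  (F.powerset.filter fun M => G.IsMatching M).sup Finset.card

/-- ω*(G) = max over nonempty F ⊆ E of ⌈|F| / π(F)⌉. -/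
noncomputable def omegaStar : ℕ :=
  (Finset.univ.powerset.filter fun F : Finset G.E => F.Nonempty).sup
    fun F => ceilDiv F.card (G.matchingNumber F)

/-- H is a sub-multigraph of G. -/
def IsSub (H G : Multigraph) : Prop :=
  ∃ (f : H.V ↪ G.V) (g : H.E ↪ G.E),
    ∀ e : H.E, G.ends (g e) = (H.ends e).map f

/-- H is an induced sub-multigraph of G: additionally every edge of G with both
endpoints in the image of the vertex embedding comes from H. -/
def IsInducedSub (H G : Multigraph) : Prop :=
  ∃ (f : H.V ↪ G.V) (g : H.E ↪ G.E),
    (∀ e : H.E, G.ends (g e) = (H.ends e).map f) ∧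
    ∀ e' : G.E, (∀ x ∈ G.ends e', x ∈ Set.range f) → e' ∈ Set.range g

/-- Regularization: if G is regular with ω(G) ≤ Δ(G), R(G) = G; otherwise take two
disjoint copies of G and join each vertex x to its copy by
max(Δ(G), ω(G)) − deg_G(x) parallel edges. -/
noncomputable def regularize (G : Multigraph) : Multigraph :=
  if (∀ x : G.V, G.degree x = G.maxDegree) ∧ G.density ≤ G.maxDegree then G
  else
    { V := G.V ⊕ G.V
      E := G.E ⊕ G.E ⊕ (Σ x : G.V, Fin (max G.maxDegree G.density - G.degree x))
      fintypeV := inferInstance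
      decEqV := inferInstance
      fintypeE := inferInstance
      decEqE := inferInstance
      ends := fun e =>
        match e with
        | Sum.inl e => (G.ends e).map Sum.inl
        | Sum.inr (Sum.inl e) => (G.ends e).map Sum.inr
        | Sum.inr (Sum.inr p) => s(Sum.inl p.1, Sum.inr p.1)
      noLoops := by
        rintro (e | e | p)
        · rw [Sym2.isDiag_map Sum.inl_injective]; exact G.noLoops e
        · rw [Sym2.isDiag_map Sum.inr_injective]; exact G.noLoops e
        · rw [Sym2.mk_isDiag_iff]; simp }

end Multigraph

/-! Assigning every vertex the full palette of Δ colours is a degree-colouring: its cover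
condition reads |E(S)| ≤ Δ ⌊|S|/2⌋, which is ω(G) ≤ Δ. Conversely a degree-colouring gives each
vertex x exactly deg x distinct colours, so it uses at least Δ of them. -/

namespace Multigraph

variable (G : Multigraph)

theorem le_mul_of_ceilDiv_le {a b k : ℕ} (hb : 0 < b) (h : ceilDiv a b ≤ k) : a ≤ k * b := by
  unfold ceilDiv at h
  have := (Nat.div_lt_iff_lt_mul hb).mp (Nat.lt_succ_of_le h)
  rw [Nat.succ_mul] at this
  omega

theorem edgesIn_eq_empty_of_card_lt_two {S : Finset G.V} (hS : S.card < 2) :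
    G.edgesIn S = ∅ := by
  refine eq_empty_iff_forall_notMem.mpr fun e he => ?_
  rw [edgesIn, mem_filter] at he
  induction h : G.ends e using Sym2.ind with
  | _ a b =>
    have hab : a ≠ b := fun hab => G.noLoops e (by rw [h, Sym2.mk_isDiag_iff]; exact hab)
    have ha : a ∈ S := he.2 a (by simp [h])
    have hb : b ∈ S := he.2 b (by simp [h])
    exact absurd (one_lt_card.mpr ⟨a, ha, b, hb, hab⟩) (by omega)

theorem card_edgesIn_le_density_mul (S : Finset G.V) :
    (G.edgesIn S).card ≤ G.density * (S.card / 2) := by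
  by_cases hS : 2 ≤ S.card
  · refine le_mul_of_ceilDiv_le (by omega) ?_
    exact le_sup (f := fun T => ceilDiv (G.edgesIn T).card (T.card / 2)) (by simp [hS])
  · simp [G.edgesIn_eq_empty_of_card_lt_two (not_le.mp hS)]

theorem isDegreeColoring_const_univ {c : ℕ} (hdeg : ∀ x, G.degree x = c)
    (hω : G.density ≤ c) : G.IsDegreeColoring c fun _ => univ := by
  refine ⟨fun x => by simp [hdeg x], fun S => ?_⟩
  simp only [mem_univ, filter_true, sum_const, card_univ, Fintype.card_fin, smul_eq_mul]
  exact (G.card_edgesIn_le_density_mul S).trans (Nat.mul_le_mul_right _ hω)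

theorem maxDegree_le_of_isDegreeColoring {c : ℕ} {μ : G.V → Finset (Fin c)}
    (hμ : G.IsDegreeColoring c μ) : G.maxDegree ≤ c :=
  Finset.sup_le fun x _ => hμ.1 x ▸ (card_le_univ (μ x)).trans_eq (Fintype.card_fin c)

end Multigraph

/-- if G is Δ-regular (Δ = Δ(G)) and ω(G) ≤ Δ, then τ(G) = Δ. -/
theorem stmt_8 (G : Multigraph) (hreg : ∀ x : G.V, G.degree x = G.maxDegree)
    (hω : G.density ≤ G.maxDegree) :
    G.tau = G.maxDegree := by
  have hmem : G.maxDegree ∈ {c : ℕ | ∃ μ : G.V → Finset (Fin c), G.IsDegreeColoring c μ} :=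
    ⟨_, G.isDegreeColoring_const_univ hreg hω⟩
  refine le_antisymm (Nat.sInf_le hmem) (le_csInf ⟨_, hmem⟩ ?_)
  rintro c ⟨μ, hμ⟩
  exact G.maxDegree_le_of_isDegreeColoring hμ
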